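/- arXiv:1107.4130 — 3 statements merged into one kernel-verified Lean document; each statement's English description precedes it below -/
import Mathlib

section
/- G acts doubly transitively on ℤ/p ∪ {∞}: for any two ordered pairs of distinct points there is an element of G carrying the first pair to the second. -/
instance (X : Type*) [DecidableEq X] : DecidableEq (OnePoint X) :=
  inferInstanceAs (DecidableEq (Option X))

/-- The translation `z ↦ z + a` on `ℤ/p ∪ {∞}`, fixing `∞`. -/
def ptrans (p : ℕ) (a : ZMod p) : Equiv.Perm (OnePoint (ZMod p)) :=
  Equiv.optionCongr (Equiv.addRight a)

/-- The map `z ↦ a z` on `ℤ/p ∪ {∞}`, fixing `∞`, for `a ≠ 0`. -/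
def pmul (p : ℕ) [Fact p.Prime] (a : ZMod p) (ha : a ≠ 0) : Equiv.Perm (OnePoint (ZMod p)) :=
  Equiv.optionCongr (Equiv.mulLeft₀ a ha)

/-- Multiplication by `a` extended to `ℤ/p ∪ {∞}` (with `a·∞ = ∞`). -/
def opSmul (p : ℕ) (a : ZMod p) : OnePoint (ZMod p) → OnePoint (ZMod p) :=
  fun x => Option.map (fun z => a * z) x

/-- Underlying function of the map `z ↦ -1/z`. -/
def negInvFun (p : ℕ) : OnePoint (ZMod p) → OnePoint (ZMod p)
  | Option.none => Option.some (0 : ZMod p)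
  | Option.some z => if z = 0 then Option.none else Option.some (-z⁻¹ : ZMod p)

/-- The permutation `z ↦ -1/z` of `ℤ/p ∪ {∞}` (sending `0 ↦ ∞` and `∞ ↦ 0`). -/
def negInvPerm (p : ℕ) [Fact p.Prime] : Equiv.Perm (OnePoint (ZMod p)) :=
  Function.Involutive.toPerm (negInvFun p) (by
    intro x
    match x with
    | Option.none => simp [negInvFun] <;> rfl
    | Option.some z =>
      by_cases hz : z = 0
      · simp [negInvFun, hz] <;> rfl
      · have h1 : (-z⁻¹ : ZMod p) ≠ 0 := by simp [hz]
        simp [negInvFun, hz, h1, inv_neg, inv_inv] <;> rfl)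

/-- The involution `(0 ∞)(1 3)(2 6)(4 5)`. -/
def inv1 (p : ℕ) : Equiv.Perm (OnePoint (ZMod p)) :=
  Equiv.swap ((0 : ZMod p) : OnePoint (ZMod p)) OnePoint.infty *
  Equiv.swap ((1 : ZMod p) : OnePoint (ZMod p)) ((3 : ZMod p) : OnePoint (ZMod p)) *
  Equiv.swap ((2 : ZMod p) : OnePoint (ZMod p)) ((6 : ZMod p) : OnePoint (ZMod p)) *
  Equiv.swap ((4 : ZMod p) : OnePoint (ZMod p)) ((5 : ZMod p) : OnePoint (ZMod p))

/-- The involution `(0 ∞)(1 5)(2 3)(4 6)`. -/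
def inv2 (p : ℕ) : Equiv.Perm (OnePoint (ZMod p)) :=
  Equiv.swap ((0 : ZMod p) : OnePoint (ZMod p)) OnePoint.infty *
  Equiv.swap ((1 : ZMod p) : OnePoint (ZMod p)) ((5 : ZMod p) : OnePoint (ZMod p)) *
  Equiv.swap ((2 : ZMod p) : OnePoint (ZMod p)) ((3 : ZMod p) : OnePoint (ZMod p)) *
  Equiv.swap ((4 : ZMod p) : OnePoint (ZMod p)) ((6 : ZMod p) : OnePoint (ZMod p))

/-- The set of nonzero squares in `ℤ/p`. -/
def Rset (p : ℕ) : Set (ZMod p) := {a | a ≠ 0 ∧ IsSquare a}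

/-- The set of nonsquares in `(ℤ/p)*`. -/
def Nset (p : ℕ) : Set (ZMod p) := {a | a ≠ 0 ∧ ¬ IsSquare a}

theorem Subgroup.exists_mem_apply_eq_and_apply_eq_of_stabilizer {α : Type*} (G : Subgroup (Equiv.Perm α)) (c : α)
    (htrans : ∀ x y : α, ∃ g ∈ G, g x = y)
    (hstab : ∀ x y : α, x ≠ c → y ≠ c → ∃ g ∈ G, g c = c ∧ g x = y)
    {x₁ x₂ y₁ y₂ : α} (hx : x₁ ≠ x₂) (hy : y₁ ≠ y₂) :
    ∃ g ∈ G, g x₁ = y₁ ∧ g x₂ = y₂ := by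
  -- `g` sends `x₂` to `c`, `k` fixes `c` and moves `g x₁` to `h⁻¹ y₁`, and `h` sends `c` to `y₂`.
  obtain ⟨g, hg, hgx₂⟩ := htrans x₂ c
  obtain ⟨h, hh, hhc⟩ := htrans c y₂
  have hgx₁ : g x₁ ≠ c := hgx₂ ▸ g.injective.ne hx
  have hhy₁ : h⁻¹ y₁ ≠ c := by
    rw [Ne, Equiv.Perm.inv_eq_iff_eq, hhc]
    exact hy
  obtain ⟨k, hk, hkc, hkx⟩ := hstab _ _ hgx₁ hhy₁
  refine ⟨h * k * g, mul_mem (mul_mem hh hk) hg, ?_, ?_⟩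
  · simp [hkx]
  · simp [hgx₂, hkc, hhc]

@[simp]
theorem ptrans_infty (p : ℕ) (a : ZMod p) : ptrans p a OnePoint.infty = OnePoint.infty :=
  rfl

@[simp]
theorem ptrans_coe (p : ℕ) (a z : ZMod p) : ptrans p a z = ((z + a : ZMod p) : OnePoint (ZMod p)) :=
  rfl

theorem exists_mem_fixing_infty_apply_eq (p : ℕ) (G : Subgroup (Equiv.Perm (OnePoint (ZMod p))))
    (htransl : ∀ a : ZMod p, ptrans p a ∈ G) (x y : OnePoint (ZMod p))
    (hx : x ≠ OnePoint.infty) (hy : y ≠ OnePoint.infty) :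
    ∃ g ∈ G, g OnePoint.infty = OnePoint.infty ∧ g x = y := by
  obtain ⟨a, rfl⟩ := OnePoint.ne_infty_iff_exists.mp hx
  obtain ⟨b, rfl⟩ := OnePoint.ne_infty_iff_exists.mp hy
  exact ⟨ptrans p (b - a), htransl _, ptrans_infty p _, by simp⟩

theorem G_doubly_transitive_general
    (p : ℕ)
    (G : Subgroup (Equiv.Perm (OnePoint (ZMod p))))
    (htrans : ∀ x y : OnePoint (ZMod p), ∃ g ∈ G, g x = y)
    (htransl : ∀ a : ZMod p, ptrans p a ∈ G) :
    ∀ x₁ x₂ y₁ y₂ : OnePoint (ZMod p), x₁ ≠ x₂ → y₁ ≠ y₂ →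
      ∃ g ∈ G, g x₁ = y₁ ∧ g x₂ = y₂ := fun _ _ _ _ hx hy =>
  G.exists_mem_apply_eq_and_apply_eq_of_stabilizer OnePoint.infty htrans
    (exists_mem_fixing_infty_apply_eq p G htransl) hx hy

theorem G_doubly_transitive
    (p : ℕ) [Fact p.Prime] (hp2 : p ≠ 2)
    (G : Subgroup (Equiv.Perm (OnePoint (ZMod p))))
    (htrans : ∀ x y : OnePoint (ZMod p), ∃ g ∈ G, g x = y)
    (hcard : Nat.card G = (p ^ 3 - p) / 2)
    (htransl : ∀ a : ZMod p, ptrans p a ∈ G) :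
    ∀ x₁ x₂ y₁ y₂ : OnePoint (ZMod p), x₁ ≠ x₂ → y₁ ≠ y₂ →
      ∃ g ∈ G, g x₁ = y₁ ∧ g x₂ = y₂ :=
  G_doubly_transitive_general p G htrans htransl
end

section
/- For every τ ∈ K̄ there exists an odd natural number n such that τ(a·z) = aⁿ · τ(z) for all z ∈ (ℤ/p)* and all a ∈ R, and (p − 1)/2 divides n² − 1. -/
/-!
Let `S` be the stabilizer of `∞` in `G` and `H` the stabilizer of both `∞` and `0`. Orbit–stabilizer
gives `|S| = p (p - 1) / 2` and `|H| = (p - 1) / 2`. As `(p - 1) / 2 < p`, the translations form the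
only subgroup of order `p` of `S`, so `S` normalizes them; an element of `H` that conjugates
`z ↦ z + 1` to a translation `z ↦ z + b` is `z ↦ b z`. Hence `H` is the group of multiplications by
the `(p - 1) / 2`-th roots of unity, that is, by the nonzero squares.

Since `τ` swaps `0` and `∞`, conjugation by `τ` is an endomorphism of the cyclic group `H`, hence
`h ↦ h ^ k`. As `τ²` lies in the abelian group `H`, conjugating twice is trivial, so
`k² ≡ 1 [MOD (p - 1) / 2]`, and `k` can be replaced by an odd representative of its class.
-/

open Equiv MulAction OnePoint

namespace Subgroup

variable {Γ : Type*} [Group Γ]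

theorem card_inf_stabilizer_mul_card_orbit {α : Type*} [MulAction Γ α] (G : Subgroup Γ) (x : α) :
    Nat.card ↥(G ⊓ stabilizer Γ x) * Nat.card (orbit G x) = Nat.card G := by
  have hmap : (stabilizer G x).map G.subtype = G ⊓ stabilizer Γ x := by
    ext g
    simp [mem_stabilizer_iff, and_comm]
  rw [← hmap, card_map_of_injective G.subtype_injective, mul_comm, ← Nat.card_prod]
  exact Nat.card_congr (orbitProdStabilizerEquivGroup G x)

theorem eq_of_le_of_card_eq_prime {p : ℕ} (hp : p.Prime) {S P Q : Subgroup Γ} [Finite S]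
    (hPS : P ≤ S) (hQS : Q ≤ S) (hP : Nat.card P = p) (hQ : Nat.card Q = p)
    (hS : Nat.card S < p * p) : P = Q := by
  have : Finite P := Nat.finite_of_card_ne_zero (hP.trans_ne hp.ne_zero)
  have : Finite Q := Nat.finite_of_card_ne_zero (hQ.trans_ne hp.ne_zero)
  by_contra hPQ
  have hdisj : Disjoint P Q := by
    rw [disjoint_iff]
    have hdvd : Nat.card ↥(P ⊓ Q) ∣ p := hP ▸ card_dvd_of_le inf_le_left
    rcases hp.eq_one_or_self_of_dvd _ hdvd with h | h
    · exact card_eq_one.1 h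
    · exact absurd ((eq_of_le_of_card_ge inf_le_left (by rw [hP, h])).symm.trans
        (eq_of_le_of_card_ge inf_le_right (by rw [hQ, h]))) hPQ
  have hinj : Function.Injective fun xy : P × Q =>
      (⟨xy.1 * xy.2, S.mul_mem (hPS xy.1.2) (hQS xy.2.2)⟩ : S) :=
    fun _ _ h => mul_injective_of_disjoint hdisj (congrArg Subtype.val h)
  have hcard := Nat.card_le_card_of_injective _ hinj
  rw [Nat.card_prod, hP, hQ] at hcard
  omega

theorem exists_conj_eq_pow_of_isCyclic {H : Subgroup Γ} [IsCyclic H] [Finite H] {τ : Γ}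
    (hτH : ∀ h ∈ H, τ * h * τ⁻¹ ∈ H) (hτ2 : τ * τ ∈ H) :
    ∃ n : ℕ, (∀ h ∈ H, τ * h * τ⁻¹ = h ^ n) ∧ n * n ≡ 1 [MOD Nat.card H] := by
  let σ : H →* H :=
    { toFun h := ⟨τ * h * τ⁻¹, hτH h h.2⟩
      map_one' := by ext; simp
      map_mul' x y := by ext; simp [mul_assoc] }
  obtain ⟨g, hg⟩ := IsCyclic.exists_monoid_generator (α := H)
  obtain ⟨n, hn⟩ := Submonoid.mem_powers_iff _ _ |>.1 (hg (σ g))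
  have hσ (x : H) : σ x = x ^ n := by
    obtain ⟨j, rfl⟩ := Submonoid.mem_powers_iff _ _ |>.1 (hg x)
    rw [map_pow, ← hn, ← pow_mul, ← pow_mul, mul_comm]
  refine ⟨n, fun h hh => congrArg Subtype.val (hσ ⟨h, hh⟩), ?_⟩
  have hσσ : σ (σ g) = g := by
    have hc : τ * τ * (g : Γ) = g * (τ * τ) :=
      congrArg Subtype.val ((IsCyclic.commGroup (α := H)).mul_comm ⟨τ * τ, hτ2⟩ g)
    ext
    calc τ * (τ * g * τ⁻¹) * τ⁻¹ = τ * τ * g * (τ * τ)⁻¹ := by group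
      _ = g := by rw [hc, mul_inv_cancel_right]
  rw [← orderOf_eq_card_of_forall_mem_powers hg, ← pow_eq_pow_iff_modEq, pow_one, pow_mul,
    ← hσ, ← hσ, hσσ]

end Subgroup

theorem Nat.exists_odd_modEq_of_mul_self_modEq_one {k m : ℕ} (h : k * k ≡ 1 [MOD m]) :
    ∃ n, Odd n ∧ n ≡ k [MOD m] ∧ m ∣ n ^ 2 - 1 := by
  suffices ∃ n, Odd n ∧ n ≡ k [MOD m] by
    obtain ⟨n, hodd, hnk⟩ := this
    refine ⟨n, hodd, hnk, (Nat.modEq_iff_dvd' (Nat.one_le_pow _ _ hodd.pos)).1 ?_⟩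
    rw [sq]
    exact ((hnk.mul hnk).trans h).symm
  rcases Nat.even_or_odd k with hk | hk
  · have hm : Odd m := by
      by_contra hm
      have h2 : Odd (k * k) := Nat.odd_iff.2 (h.of_dvd (Nat.not_odd_iff_even.1 hm).two_dvd)
      exact Nat.not_odd_iff_even.2 hk (Nat.odd_mul.1 h2).1
    exact ⟨k + m, hk.add_odd hm, Nat.add_modEq_right⟩
  · exact ⟨k, hk, rfl⟩

def unitsMulPerm (K : Type*) [Monoid K] : Kˣ →* Perm (OnePoint K) where
  toFun u := Equiv.optionCongr (MulAction.toPerm u)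
  map_one' := Equiv.ext fun x => Option.recOn x rfl fun z => congrArg Option.some (one_smul Kˣ z)
  map_mul' u v := Equiv.ext fun x =>
    Option.recOn x rfl fun z => congrArg Option.some (mul_smul u v z)

@[simp]
theorem unitsMulPerm_apply_coe {K : Type*} [Monoid K] (u : Kˣ) (z : K) :
    unitsMulPerm K u z = ↑(u * z : K) := rfl

theorem unitsMulPerm_injective {K : Type*} [Monoid K] : Function.Injective (unitsMulPerm K) :=
  fun u v h => Units.ext <| by simpa using DFunLike.congr_fun h ((1 : K) : OnePoint K)

variable {p : ℕ}

local notation "𝕏" => OnePoint (ZMod p)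

theorem opSmul_coe_units (u : (ZMod p)ˣ) : opSmul p (u : ZMod p) = unitsMulPerm (ZMod p) u := rfl

@[simp]
theorem ptrans_apply_coe (a z : ZMod p) : ptrans p a z = ↑(z + a) := rfl

def ptransHom (p : ℕ) : Multiplicative (ZMod p) →* Perm (OnePoint (ZMod p)) :=
  MonoidHom.mk' (fun a => ptrans p a.toAdd) fun a b => by
    refine Equiv.ext fun x => ?_
    cases x
    · rfl
    · simp only [toAdd_mul, ptrans_apply_coe, Perm.coe_mul, Function.comp_apply, some_eq_iff]
      abel

@[simp]
theorem ptransHom_apply (a : Multiplicative (ZMod p)) : ptransHom p a = ptrans p a.toAdd := rfl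

def translations (p : ℕ) : Subgroup (Perm (OnePoint (ZMod p))) := (ptransHom p).range

theorem mem_translations {x : Perm 𝕏} : x ∈ translations p ↔ ∃ a, ptrans p a = x :=
  ⟨fun ⟨a, ha⟩ => ⟨a.toAdd, ha⟩, fun ⟨a, ha⟩ => ⟨.ofAdd a, ha⟩⟩

theorem card_translations [NeZero p] : Nat.card (translations p) = p := by
  have hinj : Function.Injective (ptransHom p) := fun a b h => by
    simpa using DFunLike.congr_fun h ((0 : ZMod p) : 𝕏)
  rw [translations, ← Nat.card_congr (MonoidHom.ofInjective hinj).toEquiv]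
  simp

theorem pow_eq_one_of_mem_Rset [Fact p.Prime] (hp2 : p ≠ 2) {a : ZMod p} (ha : a ∈ Rset p) :
    a ^ ((p - 1) / 2) = 1 := by
  have h := (ZMod.euler_criterion p ha.1).1 ha.2
  obtain ⟨k, rfl⟩ := (Fact.out : p.Prime).odd_of_ne_two hp2
  rwa [show (2 * k + 1) / 2 = (2 * k + 1 - 1) / 2 by omega] at h

theorem exists_unitsMulPerm_eq_of_conj_ptrans [Fact p.Prime] {g : Perm 𝕏} (hg : g ∞ = ∞)
    (hg0 : g ((0 : ZMod p) : 𝕏) = ((0 : ZMod p) : 𝕏)) {b : ZMod p}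
    (hb : g * ptrans p 1 * g⁻¹ = ptrans p b) : ∃ u, unitsMulPerm (ZMod p) u = g := by
  have hstep (z : ZMod p) : g ↑(z + 1) = ptrans p b (g z) := by
    rw [← hb]
    simp only [Perm.mul_apply, Perm.coe_inv, symm_apply_apply]
    rfl
  have hnat (n : ℕ) : g ↑(n : ZMod p) = ↑((n : ZMod p) * b) := by
    induction n with
    | zero => simp [hg0]
    | succ n ih => rw [Nat.cast_succ, hstep, ih, ptrans_apply_coe, add_one_mul]
  have hmul (z : ZMod p) : g z = ↑(b * z) := by
    simpa [mul_comm] using hnat z.val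
  have hb0 : b ≠ 0 := by
    rintro rfl
    have h1 : g ((1 : ZMod p) : 𝕏) = g ((0 : ZMod p) : 𝕏) := by rw [hmul, zero_mul, hg0]
    exact one_ne_zero (coe_injective (g.injective h1))
  refine ⟨Units.mk0 b hb0, Equiv.ext fun x => ?_⟩
  induction x using OnePoint.rec with
  | infty => exact hg.symm
  | coe z => exact (hmul z).symm

section

variable [Fact p.Prime] {G : Subgroup (Perm (OnePoint (ZMod p)))}

theorem card_inf_stabilizer_infty (hp2 : p ≠ 2) (htrans : ∀ x y : 𝕏, ∃ g ∈ G, g x = y)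
    (hcard : Nat.card G = (p ^ 3 - p) / 2) :
    Nat.card ↥(G ⊓ stabilizer (Perm 𝕏) (∞ : 𝕏)) = p * ((p - 1) / 2) := by
  have horbit : orbit G (∞ : 𝕏) = Set.univ :=
    Set.eq_univ_of_forall fun y => let ⟨g, hg, hgy⟩ := htrans ∞ y; ⟨⟨g, hg⟩, hgy⟩
  have h := G.card_inf_stabilizer_mul_card_orbit (∞ : 𝕏)
  have hX : Nat.card 𝕏 = p + 1 := by
    rw [OnePoint, Nat.card_eq_fintype_card, Fintype.card_option, ZMod.card]
  rw [horbit, Nat.card_univ, hX, hcard] at h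
  obtain ⟨m, rfl⟩ := (Fact.out : p.Prime).odd_of_ne_two hp2
  have hcube : (2 * m + 1) ^ 3 - (2 * m + 1) = 2 * ((2 * m + 1) * m * (2 * m + 1 + 1)) :=
    Nat.sub_eq_of_eq_add (by ring)
  rw [hcube, Nat.mul_div_cancel_left _ two_pos] at h
  rw [Nat.add_sub_cancel, Nat.mul_div_cancel_left _ two_pos]
  exact Nat.eq_of_mul_eq_mul_right (Nat.succ_pos _) h

theorem orbit_inf_stabilizer_infty_zero (htransl : ∀ a : ZMod p, ptrans p a ∈ G) :
    orbit ↥(G ⊓ stabilizer (Perm 𝕏) (∞ : 𝕏)) ((0 : ZMod p) : 𝕏) = Set.range ((↑) : ZMod p → 𝕏) := by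
  ext x
  constructor
  · rintro ⟨⟨g, -, hg⟩, rfl⟩
    exact ne_infty_iff_exists.1 fun h => coe_ne_infty _ (g.injective (h.trans hg.symm))
  · rintro ⟨a, rfl⟩
    exact ⟨⟨ptrans p a, htransl a, rfl⟩, by simp [Subgroup.smul_def]⟩

theorem card_inf_stabilizer_infty_zero (hp2 : p ≠ 2) (htrans : ∀ x y : 𝕏, ∃ g ∈ G, g x = y)
    (hcard : Nat.card G = (p ^ 3 - p) / 2) (htransl : ∀ a : ZMod p, ptrans p a ∈ G) :
    Nat.card ↥(G ⊓ stabilizer (Perm 𝕏) (∞ : 𝕏) ⊓ stabilizer (Perm 𝕏) ((0 : ZMod p) : 𝕏)) =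
      (p - 1) / 2 := by
  have h := (G ⊓ stabilizer (Perm 𝕏) (∞ : 𝕏)).card_inf_stabilizer_mul_card_orbit ((0 : ZMod p) : 𝕏)
  rw [orbit_inf_stabilizer_infty_zero htransl, Nat.card_range_of_injective coe_injective,
    Nat.card_zmod, card_inf_stabilizer_infty hp2 htrans hcard, mul_comm p] at h
  exact Nat.eq_of_mul_eq_mul_right (Fact.out : p.Prime).pos h

theorem conj_mem_translations (hp2 : p ≠ 2) (htrans : ∀ x y : 𝕏, ∃ g ∈ G, g x = y)
    (hcard : Nat.card G = (p ^ 3 - p) / 2) (htransl : ∀ a : ZMod p, ptrans p a ∈ G)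
    {g x : Perm 𝕏} (hg : g ∈ G ⊓ stabilizer (Perm 𝕏) (∞ : 𝕏)) (hx : x ∈ translations p) :
    g * x * g⁻¹ ∈ translations p := by
  set S := G ⊓ stabilizer (Perm 𝕏) (∞ : 𝕏)
  have hTS : translations p ≤ S := by
    rintro _ ⟨a, rfl⟩
    exact ⟨htransl a.toAdd, rfl⟩
  have hconj : (translations p).map (MulAut.conj g).toMonoidHom = translations p := by
    refine Subgroup.eq_of_le_of_card_eq_prime Fact.out ?_ hTS ?_ card_translations ?_
    · rintro _ ⟨y, hy, rfl⟩
      exact S.mul_mem (S.mul_mem hg (hTS hy)) (S.inv_mem hg)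
    · rw [Subgroup.card_map_of_injective (MulAut.conj g).injective, card_translations]
    · rw [card_inf_stabilizer_infty hp2 htrans hcard]
      have hp := (Fact.out : p.Prime).pos
      exact Nat.mul_lt_mul_of_pos_left (by omega) hp
  exact hconj ▸ Subgroup.mem_map_of_mem _ hx

theorem inf_stabilizer_infty_zero_eq_map (hp2 : p ≠ 2) (htrans : ∀ x y : 𝕏, ∃ g ∈ G, g x = y)
    (hcard : Nat.card G = (p ^ 3 - p) / 2) (htransl : ∀ a : ZMod p, ptrans p a ∈ G) :
    G ⊓ stabilizer (Perm 𝕏) (∞ : 𝕏) ⊓ stabilizer (Perm 𝕏) ((0 : ZMod p) : 𝕏) =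
      (powMonoidHom ((p - 1) / 2) : (ZMod p)ˣ →* (ZMod p)ˣ).ker.map (unitsMulPerm (ZMod p)) := by
  set H := G ⊓ stabilizer (Perm 𝕏) (∞ : 𝕏) ⊓ stabilizer (Perm 𝕏) ((0 : ZMod p) : 𝕏)
  have hcardH : Nat.card H = (p - 1) / 2 := card_inf_stabilizer_infty_zero hp2 htrans hcard htransl
  have hle : H ≤ (powMonoidHom ((p - 1) / 2)).ker.map (unitsMulPerm (ZMod p)) := by
    intro g hgH
    have ⟨⟨hgG, hg⟩, hg0⟩ := hgH
    obtain ⟨b, hb⟩ := mem_translations.1 <|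
      conj_mem_translations hp2 htrans hcard htransl ⟨hgG, hg⟩ (mem_translations.2 ⟨1, rfl⟩)
    obtain ⟨u, rfl⟩ := exists_unitsMulPerm_eq_of_conj_ptrans hg hg0 hb.symm
    refine ⟨u, unitsMulPerm_injective ?_, rfl⟩
    simpa [hcardH] using congrArg Subtype.val (pow_card_eq_one' (x := (⟨_, hgH⟩ : H)))
  refine Subgroup.eq_of_le_of_card_ge hle ?_
  rw [Subgroup.card_map_of_injective unitsMulPerm_injective, IsCyclic.card_powMonoidHom_ker,
    hcardH]
  exact Nat.gcd_le_right _ (hcardH ▸ Nat.card_pos)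

theorem exists_odd_conj_unitsMulPerm_eq_pow (hp2 : p ≠ 2)
    (htrans : ∀ x y : 𝕏, ∃ g ∈ G, g x = y) (hcard : Nat.card G = (p ^ 3 - p) / 2)
    (htransl : ∀ a : ZMod p, ptrans p a ∈ G) {τ : Perm 𝕏} (hτG : τ ∈ G)
    (hτ0 : τ ↑(0 : ZMod p) = ∞) (hτinf : τ ∞ = ↑(0 : ZMod p)) :
    ∃ n : ℕ, Odd n ∧
      (∀ u : (ZMod p)ˣ, u ^ ((p - 1) / 2) = 1 →
        τ * unitsMulPerm _ u * τ⁻¹ = unitsMulPerm _ (u ^ n)) ∧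
      (p - 1) / 2 ∣ n ^ 2 - 1 := by
  set H := (powMonoidHom ((p - 1) / 2) : (ZMod p)ˣ →* (ZMod p)ˣ).ker.map (unitsMulPerm (ZMod p))
    with hHdef
  have hH := inf_stabilizer_infty_zero_eq_map hp2 htrans hcard htransl
  have hmem (x : Perm 𝕏) : x ∈ H ↔ x ∈ G ∧ x ∞ = ∞ ∧ x ↑(0 : ZMod p) = ↑(0 : ZMod p) := by
    rw [hHdef, ← hH]
    simp only [Subgroup.mem_inf, mem_stabilizer_iff, Perm.smul_def, and_assoc]
  have hcardH : Nat.card H = (p - 1) / 2 := by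
    rw [hHdef, ← hH]
    exact card_inf_stabilizer_infty_zero hp2 htrans hcard htransl
  have : IsCyclic H := isCyclic_of_surjective _ (MonoidHom.subgroupMap_surjective _ _)
  have hτinv0 : τ⁻¹ ∞ = ↑(0 : ZMod p) := Perm.inv_eq_iff_eq.2 hτ0.symm
  have hτinvinf : τ⁻¹ ↑(0 : ZMod p) = ∞ := Perm.inv_eq_iff_eq.2 hτinf.symm
  have hconjH (h) (hh : h ∈ H) : τ * h * τ⁻¹ ∈ H := by
    obtain ⟨hG, hinf, h0⟩ := (hmem h).1 hh
    refine (hmem _).2 ⟨G.mul_mem (G.mul_mem hτG hG) (G.inv_mem hτG), ?_, ?_⟩ <;>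
      simp [Perm.mul_apply, hτinv0, hτinvinf, hinf, h0, hτ0, hτinf]
  have hττ : τ * τ ∈ H := (hmem _).2 ⟨G.mul_mem hτG hτG, by simp [hτ0, hτinf]⟩
  obtain ⟨k, hk, hkk⟩ := Subgroup.exists_conj_eq_pow_of_isCyclic hconjH hττ
  obtain ⟨n, hn, hnk, hdvd⟩ := Nat.exists_odd_modEq_of_mul_self_modEq_one (hcardH ▸ hkk)
  refine ⟨n, hn, fun u hu => ?_, hdvd⟩
  have huH : unitsMulPerm _ u ∈ H := Subgroup.mem_map_of_mem _ hu
  rw [hk _ huH, map_pow]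
  exact pow_eq_pow_iff_modEq.2 (hnk.symm.of_dvd (hcardH ▸ H.orderOf_dvd_natCard huH))

end

theorem Kbar_conjugation_power
    (p : ℕ) [Fact p.Prime] (hp2 : p ≠ 2)
    (G : Subgroup (Equiv.Perm (OnePoint (ZMod p))))
    (htrans : ∀ x y : OnePoint (ZMod p), ∃ g ∈ G, g x = y)
    (hcard : Nat.card G = (p ^ 3 - p) / 2)
    (htransl : ∀ a : ZMod p, ptrans p a ∈ G)
    (τ : Equiv.Perm (OnePoint (ZMod p))) (hτG : τ ∈ G)
    (hτ0 : τ (OnePoint.some (0 : ZMod p)) = OnePoint.infty)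
    (hτinf : τ OnePoint.infty = OnePoint.some (0 : ZMod p)) :
    ∃ n : ℕ, Odd n ∧
      (∀ a ∈ Rset p, ∀ z : ZMod p, z ≠ 0 →
        τ (OnePoint.some (a * z)) = opSmul p (a ^ n) (τ (OnePoint.some z))) ∧
      (p - 1) / 2 ∣ n ^ 2 - 1 := by
  obtain ⟨n, hn, hconj, hdvd⟩ :=
    exists_odd_conj_unitsMulPerm_eq_pow hp2 htrans hcard htransl hτG hτ0 hτinf
  refine ⟨n, hn, fun a ha z _ => ?_, hdvd⟩
  set u := Units.mk0 a ha.1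
  have hu := hconj u (Units.ext (pow_eq_one_of_mem_Rset hp2 ha))
  calc τ ↑(a * z) = (τ * unitsMulPerm _ u) ↑z := rfl
    _ = (unitsMulPerm _ (u ^ n) * τ) ↑z := by rw [← hu, inv_mul_cancel_right]
    _ = opSmul p (a ^ n) (τ ↑z) := by
      rw [Perm.mul_apply, ← opSmul_coe_units, Units.val_pow_eq_pow_val, Units.val_mk0]
end

section
/- Let F be a field with more than 3 elements. If M is a normal subgroup of SL₂(F) containing some matrix that is not a scalar multiple of the identity, then M = SL₂(F). Consequently PSL₂(F), the quotient of SL₂(F) by its center, is a simple group. -/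
/-!
`SL₂(F)` is perfect and `PSL₂(F)` is simple as soon as `F` has an element `a ≠ 0` with `a² ≠ 1`,
which three excluded values `0, ±1` guarantee when `|F| > 3`. A normal subgroup `M` with a
non-scalar, hence non-central, element maps onto the simple group `PSL₂(F)`, so `M · Z = SL₂(F)`
for the centre `Z`. Since `Z` is central, `[SL₂(F), SL₂(F)] = [M Z, M Z] ≤ M`, and perfectness
gives `M = SL₂(F)`.
-/

open Subgroup

theorem exists_ne_zero_sq_ne_one {R : Type*} [Ring R] [NoZeroDivisors R]
    (hR : 3 < Cardinal.mk R) : ∃ a : R, a ≠ 0 ∧ a ^ 2 ≠ 1 := by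
  obtain ⟨a, ha⟩ := Cardinal.exists_notMem_of_length_lt [(0 : R), 1, -1] (by simpa using hR)
  simp only [List.mem_cons, List.not_mem_nil, or_false, not_or] at ha
  exact ⟨a, ha.1, by rw [Ne, sq_eq_one_iff, not_or]; exact ha.2⟩

theorem Subgroup.Normal.sup_center_eq_top_of_not_le_center {G : Type*} [Group G]
    [IsSimpleGroup (G ⧸ center G)] {N : Subgroup G} (hN : N.Normal) (h : ¬ N ≤ center G) :
    N ⊔ center G = ⊤ := by
  rcases (hN.map _ (QuotientGroup.mk'_surjective (center G))).eq_bot_or_eq_top with hbot | htop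
  · exact absurd (by simpa using (map_eq_bot_iff _).mp hbot) h
  · rw [← QuotientGroup.ker_mk' (center G), ← comap_map_eq, htop, comap_top]

theorem Subgroup.Normal.eq_top_of_sup_center_eq_top {G : Type*} [Group G] [Group.IsPerfect G]
    {N : Subgroup G} (hN : N.Normal) (h : N ⊔ center G = ⊤) : N = ⊤ :=
  top_le_iff.mp <| Group.IsPerfect.commutator_eq_top (G := G) ▸
    hN.commutator_le_of_self_sup_commutative_eq_top h inferInstance

theorem Matrix.SpecialLinearGroup.notMem_center_of_ne_smul_one {n R : Type*} [Fintype n]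
    [DecidableEq n] [CommRing R] {A : SpecialLinearGroup n R}
    (hA : ¬ ∃ r : R, (A : Matrix n n R) = r • 1) : A ∉ center (SpecialLinearGroup n R) := by
  rw [mem_center_iff]
  rintro ⟨r, -, hr⟩
  exact hA ⟨r, by rw [← hr, smul_one_eq_diagonal]; rfl⟩

theorem SL2_normal_subgroup_and_PSL2_simple
    (F : Type*) [Field F] (hF : 3 < Cardinal.mk F) :
    (∀ M : Subgroup (Matrix.SpecialLinearGroup (Fin 2) F), M.Normal →
      (∃ A ∈ M, ¬ ∃ r : F, (A : Matrix (Fin 2) (Fin 2) F) = r • (1 : Matrix (Fin 2) (Fin 2) F)) →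
      M = ⊤) ∧
    IsSimpleGroup (Matrix.SpecialLinearGroup (Fin 2) F ⧸
      Subgroup.center (Matrix.SpecialLinearGroup (Fin 2) F)) := by
  obtain ⟨a, ha, ha_sq⟩ := exists_ne_zero_sq_ne_one hF
  have : Group.IsPerfect (Matrix.SpecialLinearGroup (Fin 2) F) :=
    ⟨Matrix.SL2.commutator_eq_top ha ha_sq⟩
  have hsimple := Matrix.ProjectiveSpecialLinearGroup.rank_two_simple' ⟨a, ha, ha_sq⟩
  refine ⟨fun M hM ⟨A, hAM, hA⟩ ↦ hM.eq_top_of_sup_center_eq_top ?_, hsimple⟩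
  exact hM.sup_center_eq_top_of_not_le_center fun hle ↦
    Matrix.SpecialLinearGroup.notMem_center_of_ne_smul_one hA (hle hAM)
end
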